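/- Let V = ℂⁿ with quadratic form q(y) = Σ yⱼ², let σ : V → ℂ be the projection onto the first coordinate, and let W ⊂ V be a real subspace that is maximal negative definite with respect to Re q and consists only of purely imaginary vectors in the first coordinate direction, i.e. σ(W) ⊆ iℝ. If W is maximal negative definite for Re q, then σ(W) = iℝ, and hence σ induces a surjective ℝ-linear map V/W → ℝ given by the real part of σ. -/
import Mathlib


/-- The real-linear map V → ℝ, v ↦ Re(σ v), where σ is projection to coordinate 0. -/
noncomputable def reSigma (n : ℕ) : (Fin (n + 1) → ℂ) →ₗ[ℝ] ℝ :=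
  Complex.reLm.comp
    ((LinearMap.proj 0 : (Fin (n + 1) → ℂ) →ₗ[ℂ] ℂ).restrictScalars ℝ)

/-- Let V = ℂⁿ⁺¹ with q(y) = Σ yⱼ² and σ the projection to the first
coordinate. If W is a real subspace that is maximal negative definite for Re q and
σ(W) ⊆ iℝ, then σ(W) = iℝ, and hence Re ∘ σ induces a surjective ℝ-linear map
V/W → ℝ. -/
theorem stmt_3 (n : ℕ) (W : Submodule ℝ (Fin (n + 1) → ℂ))
    (hneg : ∀ v ∈ W, v ≠ 0 → (∑ j, (v j) ^ 2).re < 0)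
    (hmax : ∀ W' : Submodule ℝ (Fin (n + 1) → ℂ),
      (∀ v ∈ W', v ≠ 0 → (∑ j, (v j) ^ 2).re < 0) → W ≤ W' → W' = W)
    (him : ∀ w ∈ W, (w 0).re = 0) :
    ((fun v : Fin (n + 1) → ℂ => v 0) '' (W : Set (Fin (n + 1) → ℂ))
        = {z : ℂ | z.re = 0}) ∧
    ∃ h : W ≤ LinearMap.ker (reSigma n),
      Function.Surjective (W.liftQ (reSigma n) h) := by
  classical
  -- Step 1: W contains a vector with nonzero first coordinate
  have key : ∃ w ∈ W, w 0 ≠ 0 := by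
    by_contra hcon
    push_neg at hcon
    set u : Fin (n + 1) → ℂ := Pi.single 0 Complex.I with hu
    have hu0 : u 0 = Complex.I := by simp [hu]
    have huj : ∀ j, j ≠ 0 → u j = 0 := fun j hj => Pi.single_eq_of_ne hj _
    have hW' : ∀ v ∈ W ⊔ Submodule.span ℝ {u}, v ≠ 0 → (∑ j, (v j) ^ 2).re < 0 := by
      intro v hv hvne
      rcases Submodule.mem_sup.mp hv with ⟨w, hw, s, hs, rfl⟩
      rcases Submodule.mem_span_singleton.mp hs with ⟨c, rfl⟩
      have hw0 : w 0 = 0 := hcon w hw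
      have hterm : ∀ j, ((w + c • u) j) ^ 2 = (w j) ^ 2 + (c • u j) ^ 2 := by
        intro j
        by_cases hj : j = 0
        · subst hj; simp [hw0]
        · simp [huj j hj]
      have hsum : (∑ j, ((w + c • u) j) ^ 2)
          = (∑ j, (w j) ^ 2) + ∑ j, (c • u j) ^ 2 := by
        rw [← Finset.sum_add_distrib]
        exact Finset.sum_congr rfl fun j _ => hterm j
      have hsum2 : (∑ j, (c • u j) ^ 2) = -((c : ℂ) ^ 2) := by
        rw [Finset.sum_eq_single 0]
        · rw [hu0]
          push_cast [Complex.real_smul]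
          ring_nf
          simp [Complex.I_sq]
        · intro j _ hj; simp [huj j hj]
        · simp
      have hre : (∑ j, ((w + c • u) j) ^ 2).re = (∑ j, (w j) ^ 2).re - c ^ 2 := by
        rw [hsum, hsum2]
        simp [← Complex.ofReal_pow, sub_eq_add_neg]
      rw [hre]
      by_cases hwz : w = 0
      · have hc0 : c ≠ 0 := by
          intro h; apply hvne; simp [hwz, h]
        have hz0 : (∑ j, (w j) ^ 2).re = 0 := by simp [hwz]
        rw [hz0]
        have hp : 0 < c ^ 2 := by positivity
        linarith
      · have h1 : (∑ j, (w j) ^ 2).re < 0 := hneg w hw hwz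
        nlinarith [sq_nonneg c]
    have heq := hmax _ hW' le_sup_left
    have huW : u ∈ W := by
      rw [← heq]
      exact Submodule.mem_sup_right (Submodule.subset_span rfl)
    have := hcon u huW
    rw [hu0] at this
    exact Complex.I_ne_zero this
  obtain ⟨w, hwW, hw0⟩ := key
  have hwre : (w 0).re = 0 := him w hwW
  have ht : (w 0).im ≠ 0 := by
    intro h
    exact hw0 (Complex.ext hwre h)
  constructor
  · ext z
    constructor
    · rintro ⟨v, hv, rfl⟩
      exact him v hv
    · intro hz
      refine ⟨(z.im / (w 0).im) • w, W.smul_mem _ hwW, ?_⟩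
      show (z.im / (w 0).im) • w 0 = z
      apply Complex.ext
      · simp only [Complex.smul_re, hwre, mul_zero, smul_zero]
        exact (Set.mem_setOf_eq ▸ hz).symm
      · simp [Complex.smul_im]
        field_simp
  · have hker : W ≤ LinearMap.ker (reSigma n) := by
      intro v hv
      simp only [LinearMap.mem_ker, reSigma, LinearMap.comp_apply,
        LinearMap.restrictScalars_apply, LinearMap.proj_apply, Complex.reLm_coe]
      exact him v hv
    refine ⟨hker, ?_⟩
    intro r
    refine ⟨Submodule.Quotient.mk (Pi.single 0 (r : ℂ)), ?_⟩
    rw [Submodule.liftQ_apply]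
    simp [reSigma]
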